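/- Assume a solution of the full reformulated gas system on one arc: y⁺ + y⁻ = 1 with y⁺, y⁻ ∈ {0,1}, the four McCormick inequalities for p̄⁺ with bounds ±p̄_max, bounds 0 ≤ p̄⁺ ≤ p̄_max, and the three inequalities R·f² ≥ a²(p̄⁺ + p̄_max·y − p̄_max), R·f² ≤ a²·p̄⁺, R·f² ≤ a²·p̄_max·y with y ∈ {0,1}, a, R > 0. Then a²·(y⁺ − y⁻)·p̄·y = R·f². -/

import Mathlib

/-!
The McCormick envelope of a product `x * z` is exact whenever `x` sits at an endpoint of its
range, and `y⁺ - y⁻ = ±1` does. Likewise the three big-M inequalities linearizing `c * w * y`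
are exact for binary `y`. Chaining the two identities gives the Darcy–Weisbach equation.
-/

/-- The McCormick envelope of `w = x * z` for `x ∈ [xL, xU]`, `z ∈ [zL, zU]`. -/
structure IsMcCormickEnvelope (xL xU zL zU x z w : ℝ) : Prop where
  ge_lower : xL * z + x * zL - xL * zL ≤ w
  ge_upper : xU * z + x * zU - xU * zU ≤ w
  le_upper_lower : w ≤ xU * z + x * zL - xU * zL
  le_lower_upper : w ≤ xL * z + x * zU - xL * zU

theorem IsMcCormickEnvelope.eq_mul_of_endpoint {xL xU zL zU x z w : ℝ}
    (h : IsMcCormickEnvelope xL xU zL zU x z w) (hx : x = xL ∨ x = xU) : w = x * z := by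
  rcases hx with rfl | rfl
  · linarith [h.ge_lower, h.le_lower_upper]
  · linarith [h.ge_upper, h.le_upper_lower]

theorem eq_mul_of_bigM_of_binary {q c M w y : ℝ} (hy : y = 0 ∨ y = 1) (hq : 0 ≤ q)
    (h_ge : c * (w + M * y - M) ≤ q) (h_le : q ≤ c * w) (h_le_M : q ≤ c * M * y) :
    q = c * w * y := by
  rcases hy with rfl | rfl
  · linarith
  · linarith

theorem sub_eq_neg_one_or_one_of_add_eq_one {u v : ℝ} (hu : u = 0 ∨ u = 1) (h : u + v = 1) :
    u - v = -1 ∨ u - v = 1 := by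
  rcases hu with rfl | rfl
  · left; linarith
  · right; linarith

theorem stmt_16_general (a R pb_max y yp ym pb pbp f : ℝ)
    (hR : R > 0)
    (hyp : yp = 0 ∨ yp = 1) (hsum : yp + ym = 1)
    (hy : y = 0 ∨ y = 1)
    (hMc1 : pbp ≥ (yp - ym) * pb_max + pb - pb_max)
    (hMc2 : pbp ≥ (yp - ym) * (-pb_max) - pb + (-pb_max))
    (hMc3 : pbp ≤ (yp - ym) * (-pb_max) + pb - (-pb_max))
    (hMc4 : pbp ≤ (yp - ym) * pb_max - pb + pb_max)
    (hDW1 : R * f ^ 2 ≥ a ^ 2 * (pbp + pb_max * y - pb_max))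
    (hDW2 : R * f ^ 2 ≤ a ^ 2 * pbp)
    (hDW3 : R * f ^ 2 ≤ a ^ 2 * pb_max * y) :
    a ^ 2 * (yp - ym) * pb * y = R * f ^ 2 := by
  have hMc : IsMcCormickEnvelope (-1) 1 (-pb_max) pb_max (yp - ym) pb pbp :=
    ⟨by linarith, by linarith, by linarith, by linarith⟩
  have hpbp : pbp = (yp - ym) * pb :=
    hMc.eq_mul_of_endpoint (sub_eq_neg_one_or_one_of_add_eq_one hyp hsum)
  have hDW : R * f ^ 2 = a ^ 2 * pbp * y :=
    eq_mul_of_bigM_of_binary hy (by positivity) hDW1 hDW2 hDW3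
  rw [hDW, hpbp]
  ring

theorem stmt_16 (a R pb_max y yp ym pb pbp f : ℝ)
    (ha : a > 0) (hR : R > 0) (hpmax : 0 ≤ pb_max)
    (hyp : yp = 0 ∨ yp = 1) (hym : ym = 0 ∨ ym = 1) (hsum : yp + ym = 1)
    (hy : y = 0 ∨ y = 1)
    (hpb : -pb_max ≤ pb ∧ pb ≤ pb_max)
    (hpbp : 0 ≤ pbp ∧ pbp ≤ pb_max)
    (hMc1 : pbp ≥ (yp - ym) * pb_max + pb - pb_max)
    (hMc2 : pbp ≥ (yp - ym) * (-pb_max) - pb + (-pb_max))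
    (hMc3 : pbp ≤ (yp - ym) * (-pb_max) + pb - (-pb_max))
    (hMc4 : pbp ≤ (yp - ym) * pb_max - pb + pb_max)
    (hDW1 : R * f ^ 2 ≥ a ^ 2 * (pbp + pb_max * y - pb_max))
    (hDW2 : R * f ^ 2 ≤ a ^ 2 * pbp)
    (hDW3 : R * f ^ 2 ≤ a ^ 2 * pb_max * y) :
    a ^ 2 * (yp - ym) * pb * y = R * f ^ 2 :=
  stmt_16_general a R pb_max y yp ym pb pbp f hR hyp hsum hy hMc1 hMc2 hMc3 hMc4 hDW1 hDW2 hDW3
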